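/- Let d ≥ 1 and let F : ℝ^d → ℝ be convex and attain its minimum at x*. Let K ∈ (0,1), δ ∈ ℝ, E ≥ 0, γ₀ > 0, Δ ≥ F(x₀) − F(x*), Θ ≥ ‖x₀ − x*‖², and let (x_s) satisfy the AdaptRdct-C recursion: with γ_s = K^{s/2}γ₀, F^{(γ_s)}(x) = F(x) + (γ_s/2)‖x − x₀‖² having minimizer x_s*, one has F^{(γ_s)}(x_{s+1}) − F^{(γ_s)}(x_s*) − δ ≤ K·(F^{(γ_s)}(x_s) − F^{(γ_s)}(x_s*) − δ) + E for all s ≥ 0. Then for any ε > 0 and any integer S ≥ 1 such that K^S·(Δ − δ) ≤ ε/2 and (1/2 + 2/√K)·K^{S/2}·γ₀·Θ ≤ ε/2, it holds that F(x_S) − F(x*) ≤ δ + E/(1 − K) + ε. -/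

import Mathlib

/-!
The stage gap `b_s = F^{(γ_s)}(x_s) - F^{(γ_s)}(x_s^*) - δ` obeys
`b_{s+1} ≤ K b_s + Err + (γ_s - γ_{s+1}) Θ / 2`: passing from `γ_s` to `γ_{s+1} ≤ γ_s` lowers the
regularized value of the iterate, and lowers the regularized minimum by at most
`(γ_s - γ_{s+1}) ‖x_{s+1}^* - x₀‖² / 2`, where `‖x_s^* - x₀‖² ≤ ‖x^* - x₀‖² ≤ Θ` because no
regularized minimizer can beat `x^*` on `F`. Comparing with the solution
`Err/(1-K) + γ_s Θ/(2√K)` of the corresponding linear recursion gives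
`b_S ≤ K^S (Δ - δ) + Err/(1-K) + γ_S Θ/(2√K)`, and unwinding the regularization at `x_S` costs
another `γ_S Θ / 2`.
-/

noncomputable section

def regularized {E : Type*} [SeminormedAddCommGroup E] (F : E → ℝ) (x₀ : E) (γ : ℝ) (y : E) :
    ℝ :=
  F y + γ / 2 * ‖y - x₀‖ ^ 2

section Regularization

variable {E : Type*} [SeminormedAddCommGroup E] {F : E → ℝ} {x₀ xstar m : E} {γ : ℝ}

lemma regularized_self : regularized F x₀ γ x₀ = F x₀ := by
  simp [regularized]

lemma le_regularized (hγ : 0 ≤ γ) (y : E) : F y ≤ regularized F x₀ γ y :=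
  le_add_of_nonneg_right (by positivity)

lemma regularized_mono (y : E) : Monotone fun γ ↦ regularized F x₀ γ y := fun _ _ h ↦ by
  simp only [regularized]
  gcongr

lemma norm_sub_sq_le_of_forall_regularized_le (hγ : 0 < γ) (hxstar : ∀ y, F xstar ≤ F y)
    (hm : ∀ y, regularized F x₀ γ m ≤ regularized F x₀ γ y) :
    ‖m - x₀‖ ^ 2 ≤ ‖xstar - x₀‖ ^ 2 := by
  have h := hm xstar
  simp only [regularized] at h
  have := hxstar m
  have : γ / 2 * ‖m - x₀‖ ^ 2 ≤ γ / 2 * ‖xstar - x₀‖ ^ 2 := by linarith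
  exact le_of_mul_le_mul_left this (by positivity)

lemma regularized_self_sub_le (hγ : 0 ≤ γ) (hxstar : ∀ y, F xstar ≤ F y) :
    regularized F x₀ γ x₀ - regularized F x₀ γ m ≤ F x₀ - F xstar := by
  rw [regularized_self]
  linarith [hxstar m, le_regularized (F := F) (x₀ := x₀) hγ m]

lemma sub_le_regularized_sub (hγ : 0 ≤ γ) (hm : ∀ y, regularized F x₀ γ m ≤ regularized F x₀ γ y)
    (y : E) :
    F y - F xstar ≤ regularized F x₀ γ y - regularized F x₀ γ m + γ / 2 * ‖xstar - x₀‖ ^ 2 := by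
  have := hm xstar
  have := le_regularized (F := F) (x₀ := x₀) hγ y
  simp only [regularized] at *
  linarith

lemma regularized_sub_le_of_le {γ' Θ : ℝ} {m' : E} (hγ' : γ' ≤ γ)
    (hm : ∀ y, regularized F x₀ γ m ≤ regularized F x₀ γ y) (hm' : ‖m' - x₀‖ ^ 2 ≤ Θ) (y : E) :
    regularized F x₀ γ' y - regularized F x₀ γ' m'
      ≤ regularized F x₀ γ y - regularized F x₀ γ m + (γ - γ') / 2 * Θ := by
  have hmm' := hm m'
  have hy := regularized_mono (F := F) (x₀ := x₀) y hγ'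
  have hΘ : (γ - γ') / 2 * ‖m' - x₀‖ ^ 2 ≤ (γ - γ') / 2 * Θ :=
    mul_le_mul_of_nonneg_left hm' (by linarith)
  simp only [regularized] at hmm' hy ⊢
  linarith

end Regularization

lemma sub_le_pow_mul_of_le_mul_add {K : ℝ} {b u r : ℕ → ℝ} (hK : 0 ≤ K)
    (hb : ∀ n, b (n + 1) ≤ K * b n + r n) (hu : ∀ n, K * u n + r n ≤ u (n + 1)) (n : ℕ) :
    b n - u n ≤ K ^ n * (b 0 - u 0) :=
  le_geom (u := fun n ↦ b n - u n) hK n fun k _ ↦ by linarith [hb k, hu k]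

section StageRecursion

variable {E : Type*} [SeminormedAddCommGroup E] {F : E → ℝ} {xstar : E} {x xmin : ℕ → E}
  {γ : ℕ → ℝ} {K δ Err : ℝ}

lemma sub_le_of_regularized_recursion (hxstar : ∀ y, F xstar ≤ F y) (hK0 : 0 < K) (hK1 : K < 1)
    (hErr : 0 ≤ Err) (hγ0 : 0 < γ 0) (hγ : ∀ s, γ (s + 1) = Real.sqrt K * γ s)
    (hxmin : ∀ s y, regularized F (x 0) (γ s) (xmin s) ≤ regularized F (x 0) (γ s) y)
    (hrec : ∀ s, regularized F (x 0) (γ s) (x (s + 1)) - regularized F (x 0) (γ s) (xmin s) - δ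
      ≤ K * (regularized F (x 0) (γ s) (x s) - regularized F (x 0) (γ s) (xmin s) - δ) + Err)
    (S : ℕ) :
    F (x S) - F xstar ≤ δ + Err / (1 - K) + K ^ S * (F (x 0) - F xstar - δ)
      + (1 / 2 + 1 / (2 * Real.sqrt K)) * γ S * ‖x 0 - xstar‖ ^ 2 := by
  set q := Real.sqrt K
  have hq0 : 0 < q := Real.sqrt_pos.2 hK0
  have hqK : q ^ 2 = K := Real.sq_sqrt hK0.le
  have hq1 : q < 1 := by nlinarith
  have hγ_pos (s : ℕ) : 0 < γ s := by
    induction s with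
    | zero => exact hγ0
    | succ s ih => rw [hγ]; positivity
  set r := ‖x 0 - xstar‖ ^ 2
  have hxmin_near (s : ℕ) : ‖xmin s - x 0‖ ^ 2 ≤ r :=
    (norm_sub_sq_le_of_forall_regularized_le (hγ_pos s) hxstar (hxmin s)).trans_eq
      (by rw [norm_sub_rev])
  set b : ℕ → ℝ := fun s ↦
    regularized F (x 0) (γ s) (x s) - regularized F (x 0) (γ s) (xmin s) - δ
  set u : ℕ → ℝ := fun s ↦ Err / (1 - K) + γ s * r / (2 * q)
  have hb (s : ℕ) : b (s + 1) ≤ K * b s + (Err + (γ s - γ (s + 1)) / 2 * r) := by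
    have := regularized_sub_le_of_le (γ' := γ (s + 1)) (by nlinarith [hγ s, hγ_pos s])
      (hxmin s) (hxmin_near (s + 1)) (x (s + 1))
    linarith [hrec s]
  have hu (s : ℕ) : K * u s + (Err + (γ s - γ (s + 1)) / 2 * r) ≤ u (s + 1) := by
    apply le_of_eq
    simp only [u, hγ, ← hqK]
    field_simp [(by nlinarith : 1 - q ^ 2 ≠ 0)]
    ring
  have hu0 : 0 ≤ u 0 := by
    have := (hγ_pos 0).le
    have : 0 < 1 - K := by linarith
    positivity
  have hb0 : b 0 ≤ F (x 0) - F xstar - δ := by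
    linarith [regularized_self_sub_le (x₀ := x 0) (m := xmin 0) (hγ_pos 0).le hxstar]
  have hbS : b S - u S ≤ K ^ S * (b 0 - u 0) := sub_le_pow_mul_of_le_mul_add hK0.le hb hu S
  have hKS : K ^ S * (b 0 - u 0) ≤ K ^ S * (F (x 0) - F xstar - δ) :=
    mul_le_mul_of_nonneg_left (by linarith) (by positivity)
  have hxS := sub_le_regularized_sub (hγ_pos S).le (hxmin S) (x S) (xstar := xstar)
  rw [norm_sub_rev] at hxS
  have : (1 / 2 + 1 / (2 * q)) * γ S * r = γ S / 2 * r + u S - Err / (1 - K) := by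
    simp only [u]; ring
  linarith

end StageRecursion

theorem stmt2_general (d : ℕ)
    (F : EuclideanSpace ℝ (Fin d) → ℝ)
    (xstar : EuclideanSpace ℝ (Fin d)) (hxstar : ∀ y, F xstar ≤ F y)
    (K δ Err γ0 Δ Θ : ℝ)
    (hK0 : 0 < K) (hK1 : K < 1) (hErr : 0 ≤ Err) (hγ0 : 0 < γ0)
    (x : ℕ → EuclideanSpace ℝ (Fin d))
    (hΔ : F (x 0) - F xstar ≤ Δ) (hΘ : ‖x 0 - xstar‖ ^ 2 ≤ Θ)
    (γ : ℕ → ℝ) (hγ : ∀ s, γ s = Real.sqrt K ^ s * γ0)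
    (xmin : ℕ → EuclideanSpace ℝ (Fin d))
    (hxmin : ∀ s, ∀ y, F (xmin s) + γ s / 2 * ‖xmin s - x 0‖ ^ 2
      ≤ F y + γ s / 2 * ‖y - x 0‖ ^ 2)
    (hrec : ∀ s,
      (F (x (s + 1)) + γ s / 2 * ‖x (s + 1) - x 0‖ ^ 2)
          - (F (xmin s) + γ s / 2 * ‖xmin s - x 0‖ ^ 2) - δ
        ≤ K * ((F (x s) + γ s / 2 * ‖x s - x 0‖ ^ 2)
              - (F (xmin s) + γ s / 2 * ‖xmin s - x 0‖ ^ 2) - δ) + Err) :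
    ∀ ε : ℝ, 0 < ε → ∀ S : ℕ, 1 ≤ S →
      K ^ S * (Δ - δ) ≤ ε / 2 →
      (1 / 2 + 2 / Real.sqrt K) * Real.sqrt K ^ S * γ0 * Θ ≤ ε / 2 →
      F (x S) - F xstar ≤ δ + Err / (1 - K) + ε := by
  intro ε _ S _ hεΔ hεΘ
  have hγ_succ (s : ℕ) : γ (s + 1) = Real.sqrt K * γ s := by rw [hγ, hγ]; ring
  have hrate := sub_le_of_regularized_recursion hxstar hK0 hK1 hErr (by rw [hγ]; positivity)
    hγ_succ hxmin hrec S
  have hq0 : 0 < Real.sqrt K := Real.sqrt_pos.2 hK0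
  have hinit : K ^ S * (F (x 0) - F xstar - δ) ≤ K ^ S * (Δ - δ) := by gcongr
  have hreg : (1 / 2 + 1 / (2 * Real.sqrt K)) * γ S * ‖x 0 - xstar‖ ^ 2
      ≤ (1 / 2 + 2 / Real.sqrt K) * Real.sqrt K ^ S * γ0 * Θ := by
    have : 1 / (2 * Real.sqrt K) ≤ 2 / Real.sqrt K := by
      rw [div_le_div_iff₀ (by positivity) hq0]; linarith
    rw [hγ, ← mul_assoc]
    gcongr
  linarith

/-- **AdaptRdct-C needs only `S = O(log(1/ε))` stages**: under the AdaptRdct-C recursion,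
as soon as `K^S (Δ - δ) ≤ ε/2` and `(1/2 + 2/√K) (√K)^S γ₀ Θ ≤ ε/2`, the iterate `x S`
is within `ε` of the system error `δ + Err/(1-K)`. -/
theorem stmt2 (d : ℕ) (hd : 1 ≤ d)
    (F : EuclideanSpace ℝ (Fin d) → ℝ)
    (hF : ConvexOn ℝ Set.univ F)
    (xstar : EuclideanSpace ℝ (Fin d)) (hxstar : ∀ y, F xstar ≤ F y)
    (K δ Err γ0 Δ Θ : ℝ)
    (hK0 : 0 < K) (hK1 : K < 1) (hErr : 0 ≤ Err) (hγ0 : 0 < γ0)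
    (x : ℕ → EuclideanSpace ℝ (Fin d))
    (hΔ : F (x 0) - F xstar ≤ Δ) (hΘ : ‖x 0 - xstar‖ ^ 2 ≤ Θ)
    (γ : ℕ → ℝ) (hγ : ∀ s, γ s = Real.sqrt K ^ s * γ0)
    (xmin : ℕ → EuclideanSpace ℝ (Fin d))
    (hxmin : ∀ s, ∀ y, F (xmin s) + γ s / 2 * ‖xmin s - x 0‖ ^ 2
      ≤ F y + γ s / 2 * ‖y - x 0‖ ^ 2)
    (hrec : ∀ s,
      (F (x (s + 1)) + γ s / 2 * ‖x (s + 1) - x 0‖ ^ 2)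
          - (F (xmin s) + γ s / 2 * ‖xmin s - x 0‖ ^ 2) - δ
        ≤ K * ((F (x s) + γ s / 2 * ‖x s - x 0‖ ^ 2)
              - (F (xmin s) + γ s / 2 * ‖xmin s - x 0‖ ^ 2) - δ) + Err) :
    ∀ ε : ℝ, 0 < ε → ∀ S : ℕ, 1 ≤ S →
      K ^ S * (Δ - δ) ≤ ε / 2 →
      (1 / 2 + 2 / Real.sqrt K) * Real.sqrt K ^ S * γ0 * Θ ≤ ε / 2 →
      F (x S) - F xstar ≤ δ + Err / (1 - K) + ε :=
  stmt2_general d F xstar hxstar K δ Err γ0 Δ Θ hK0 hK1 hErr hγ0 x hΔ hΘ γ hγ xmin hxmin hrec
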